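/- Let G be a graph that is (2P2, C5, S_{1,1,2})-free and contains an induced net with end-vertices a1,a2,a3 and mid-vertices b1,b2,b3. Then no vertex outside the net has exactly one or exactly two neighbours among the six net vertices. -/

import Mathlib

open SimpleGraph

/-- `H` occurs as an induced subgraph of `G` iff there is a graph embedding `H ↪g G`.
`Free H G` means `G` has no induced subgraph isomorphic to `H`. -/
def Free {α β : Type*} (H : SimpleGraph α) (G : SimpleGraph β) : Prop :=
  IsEmpty (H ↪g G)

/-- A graph is chordal if it has no induced cycle of length at least `4`. -/
def Chordal {V : Type*} (G : SimpleGraph V) : Prop :=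
  ∀ n : ℕ, 4 ≤ n → _root_.Free (cycleGraph n) G

/-- A set is independent if no two of its vertices are adjacent. -/
def IsIndepSet {V : Type*} (G : SimpleGraph V) (s : Set V) : Prop :=
  s.Pairwise fun u v => ¬ G.Adj u v

/-- `2P2`: the disjoint union of two edges. -/
def twoP2 : SimpleGraph (Fin 4) :=
  SimpleGraph.fromRel fun a b => (a = 0 ∧ b = 1) ∨ (a = 2 ∧ b = 3)

/-- The paw: a triangle `0,1,2` with a pendant vertex `3` adjacent to `2`. -/
def paw : SimpleGraph (Fin 4) :=
  SimpleGraph.fromRel fun a b =>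
    (a = 0 ∧ b = 1) ∨ (a = 0 ∧ b = 2) ∨ (a = 1 ∧ b = 2) ∨ (a = 2 ∧ b = 3)

/-- `P1 + paw`: an isolated vertex `0` together with a paw on `1,2,3,4`. -/
def p1Paw : SimpleGraph (Fin 5) :=
  SimpleGraph.fromRel fun a b =>
    (a = 1 ∧ b = 2) ∨ (a = 1 ∧ b = 3) ∨ (a = 2 ∧ b = 3) ∨ (a = 3 ∧ b = 4)

/-- `2P1 + P3`: two isolated vertices `0,1` and a path `2-3-4`. -/
def twoP1P3 : SimpleGraph (Fin 5) :=
  SimpleGraph.fromRel fun a b => (a = 2 ∧ b = 3) ∨ (a = 3 ∧ b = 4)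

/-- The chair `S_{1,1,2}`: centre `0` with leaves `1,2` and pendant path `0-3-4`. -/
def chair : SimpleGraph (Fin 5) :=
  SimpleGraph.fromRel fun a b =>
    (a = 0 ∧ b = 1) ∨ (a = 0 ∧ b = 2) ∨ (a = 0 ∧ b = 3) ∨ (a = 3 ∧ b = 4)

/-- `P1 + diamond`: an isolated vertex `0` and a diamond (`K4` minus the edge `3-4`)
on `1,2,3,4`. -/
def p1Diamond : SimpleGraph (Fin 5) :=
  SimpleGraph.fromRel fun a b =>
    (a = 1 ∧ b = 2) ∨ (a = 1 ∧ b = 3) ∨ (a = 1 ∧ b = 4) ∨ (a = 2 ∧ b = 3) ∨ (a = 2 ∧ b = 4)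

/-- `P2 + P4`: an edge `0-1` and a path `2-3-4-5`. -/
def p2P4 : SimpleGraph (Fin 6) :=
  SimpleGraph.fromRel fun a b =>
    (a = 0 ∧ b = 1) ∨ (a = 2 ∧ b = 3) ∨ (a = 3 ∧ b = 4) ∨ (a = 4 ∧ b = 5)

/-- `S_{1,2,3}`: centre `0` with pendant paths `0-1`, `0-2-3` and `0-4-5-6`. -/
def s123 : SimpleGraph (Fin 7) :=
  SimpleGraph.fromRel fun a b =>
    (a = 0 ∧ b = 1) ∨ (a = 0 ∧ b = 2) ∨ (a = 2 ∧ b = 3) ∨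
    (a = 0 ∧ b = 4) ∨ (a = 4 ∧ b = 5) ∨ (a = 5 ∧ b = 6)

/-- A complete split graph: a clique `K` complete to an independent set `I`,
together covering all vertices. -/
def IsCompleteSplit {V : Type*} (G : SimpleGraph V) : Prop :=
  ∃ K I : Set V, (∀ v, v ∈ K ∨ v ∈ I) ∧ (∀ v, ¬ (v ∈ K ∧ v ∈ I)) ∧
    G.IsClique K ∧ _root_.IsIndepSet G I ∧ ∀ k ∈ K, ∀ i ∈ I, G.Adj k i

/-!
A vertex `x` outside the net with at most two neighbours on it cannot meet all three spokes
`aₖbₖ`, so it misses both ends of one of them. If `x` sees an end `aᵢ`, then `x aᵢ` and `aₖ bₖ`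
form an induced `2P2`. Otherwise `x` sees some mid-vertex `bₘ`, and `bₘ` with leaves `aₘ`, `x`
and pendant path `bₘ bₖ aₖ` is an induced chair.
-/

namespace SimpleGraph

variable {α V : Type*} {H : SimpleGraph α} {G : SimpleGraph V}

/-- A map preserving and reflecting adjacency can only identify twins. -/
def Embedding.ofAdjIff (f : α → V) (hf : ∀ i j, G.Adj (f i) (f j) ↔ H.Adj i j)
    (htwins : ∀ i j, i ≠ j → (∀ k, H.Adj i k ↔ H.Adj j k) → f i ≠ f j) : H ↪g G where
  toFun := f
  inj' i j hij := by_contra fun hne => htwins i j hne (fun k => by rw [← hf, ← hf, hij]) hij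
  map_rel_iff' := hf _ _

end SimpleGraph

open SimpleGraph

lemma twoP2_eq_of_forall_adj_iff :
    ∀ i j : Fin 4, (∀ k, twoP2.Adj i k ↔ twoP2.Adj j k) → i = j := by
  unfold twoP2; decide

set_option synthInstance.maxSize 1000 in
lemma chair_eq_or_leaves_of_forall_adj_iff :
    ∀ i j : Fin 5, (∀ k, chair.Adj i k ↔ chair.Adj j k) → i = j ∨ i = 1 ∧ j = 2 ∨ i = 2 ∧ j = 1 := by
  unfold chair; decide

section

variable {V : Type*} {G : SimpleGraph V}

lemma not_free_twoP2 {u v w z : V} (huv : G.Adj u v) (hwz : G.Adj w z)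
    (huw : ¬G.Adj u w) (huz : ¬G.Adj u z) (hvw : ¬G.Adj v w) (hvz : ¬G.Adj v z) :
    ¬_root_.Free twoP2 G := by
  refine fun hfree => hfree.false (.ofAdjIff ![u, v, w, z] ?_ ?_)
  · intro i j
    fin_cases i <;> fin_cases j <;> simp [twoP2, huv, hwz, huw, huz, hvw, hvz, adj_comm]
  · exact fun i j hne htw => absurd (twoP2_eq_of_forall_adj_iff i j htw) hne

lemma not_free_chair {c l₁ l₂ m e : V} (hl : l₁ ≠ l₂)
    (hcl₁ : G.Adj c l₁) (hcl₂ : G.Adj c l₂) (hcm : G.Adj c m) (hme : G.Adj m e)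
    (hl₁l₂ : ¬G.Adj l₁ l₂) (hl₁m : ¬G.Adj l₁ m) (hl₁e : ¬G.Adj l₁ e)
    (hl₂m : ¬G.Adj l₂ m) (hl₂e : ¬G.Adj l₂ e) (hce : ¬G.Adj c e) :
    ¬_root_.Free chair G := by
  refine fun hfree => hfree.false (.ofAdjIff ![c, l₁, l₂, m, e] ?_ ?_)
  · intro i j
    fin_cases i <;> fin_cases j <;>
      simp [chair, hcl₁, hcl₂, hcm, hme, hl₁l₂, hl₁m, hl₁e, hl₂m, hl₂e, hce, adj_comm]
  · intro i j hne htw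
    rcases chair_eq_or_leaves_of_forall_adj_iff i j htw with h | ⟨rfl, rfl⟩ | ⟨rfl, rfl⟩
    exacts [absurd h hne, hl, hl.symm]

end

lemma Set.exists_notMem_notMem_of_ncard_add_ncard_lt {α : Type*} [Finite α] {A B : Set α}
    (h : A.ncard + B.ncard < Nat.card α) : ∃ k, k ∉ A ∧ k ∉ B := by
  by_contra! hcover
  have hunion : A ∪ B = Set.univ :=
    Set.eq_univ_of_forall fun k => (em (k ∈ A)).elim Or.inl fun hk => Or.inr (hcover k hk)
  have := Set.ncard_union_le A B
  rw [hunion, Set.ncard_univ] at this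
  omega

theorem net_no_one_or_two_neighbours_general {V : Type*} (G : SimpleGraph V)
    (h2P2 : _root_.Free twoP2 G) (hchair : _root_.Free chair G)
    (a b : Fin 3 → V)
    (hbb : ∀ i j, i ≠ j → G.Adj (b i) (b j))
    (haa : ∀ i j, ¬ G.Adj (a i) (a j))
    (hab : ∀ i j, G.Adj (a i) (b j) ↔ i = j)
    (x : V) (hx : ∀ i, x ≠ a i ∧ x ≠ b i)
    (hcount : {i | G.Adj x (a i)}.ncard + {i | G.Adj x (b i)}.ncard = 1 ∨
              {i | G.Adj x (a i)}.ncard + {i | G.Adj x (b i)}.ncard = 2) :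
    False := by
  obtain ⟨k, hxak, hxbk⟩ : ∃ k, ¬G.Adj x (a k) ∧ ¬G.Adj x (b k) :=
    Set.exists_notMem_notMem_of_ncard_add_ncard_lt (A := {i | G.Adj x (a i)})
      (B := {i | G.Adj x (b i)}) (by rw [Nat.card_fin]; omega)
  have hakbk : G.Adj (a k) (b k) := (hab k k).2 rfl
  by_cases hA : ∃ i, G.Adj x (a i)
  · obtain ⟨i, hxai⟩ := hA
    have hik : i ≠ k := by rintro rfl; exact hxak hxai
    exact not_free_twoP2 hxai hakbk hxak hxbk (haa i k) (mt (hab i k).1 hik) h2P2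
  · push Not at hA
    obtain ⟨m, hxbm⟩ : ∃ m, G.Adj x (b m) := by
      have hA0 : {i | G.Adj x (a i)}.ncard = 0 := by simp [hA]
      exact Set.nonempty_of_ncard_ne_zero (s := {i | G.Adj x (b i)}) (by omega)
    have hmk : m ≠ k := by rintro rfl; exact hxbk hxbm
    exact not_free_chair (hx m).1.symm ((hab m m).2 rfl).symm hxbm.symm (hbb m k hmk)
      hakbk.symm (fun h => hA m h.symm) (mt (hab m k).1 hmk) (haa m k) hxbk hxak
      (fun h => hmk ((hab k m).1 h.symm).symm) hchair

/-- If a `(2P2, C5, S_{1,1,2})`-free graph contains an induced net, then no vertex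
outside the net has exactly one or exactly two neighbours among the six net
vertices. -/
theorem net_no_one_or_two_neighbours {V : Type*} (G : SimpleGraph V)
    (h2P2 : _root_.Free twoP2 G) (hC5 : _root_.Free (cycleGraph 5) G) (hchair : _root_.Free chair G)
    (a b : Fin 3 → V)
    (hinj : Function.Injective (Sum.elim a b : Fin 3 ⊕ Fin 3 → V))
    (hbb : ∀ i j, i ≠ j → G.Adj (b i) (b j))
    (haa : ∀ i j, ¬ G.Adj (a i) (a j))
    (hab : ∀ i j, G.Adj (a i) (b j) ↔ i = j)
    (x : V) (hx : ∀ i, x ≠ a i ∧ x ≠ b i)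
    (hcount : {i | G.Adj x (a i)}.ncard + {i | G.Adj x (b i)}.ncard = 1 ∨
              {i | G.Adj x (a i)}.ncard + {i | G.Adj x (b i)}.ncard = 2) :
    False :=
  net_no_one_or_two_neighbours_general G h2P2 hchair a b hbb haa hab x hx hcount
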